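/- Let (R, m, k) be an artinian local ring with Hilbert function (1, n, n-1) for some n ≥ 2 (i.e., dim_k m/m² = n, dim_k m²/m³ = n-1, m³ = 0), and let x, y ∈ m \ m². Then (x, y) is an exact pair of zero-divisors of R if and only if xy = 0 and xm = ym = m². -/

import Mathlib

open IsLocalRing

/-- The length of a module, defined as the Krull dimension of its submodule lattice. -/
noncomputable def mlen (R M : Type*) [CommRing R] [AddCommGroup M] [Module R M] : ℕ∞ :=
  WithBot.unbotD 0 (Order.krullDim (Submodule R M))

/-- The length of the subquotient `A/B` of the ring, for ideals `A`, `B` (used with `B ≤ A`). -/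
noncomputable def qlen {R : Type*} [CommRing R] (A B : Ideal R) : ℕ∞ :=
  mlen R (↥A ⧸ Submodule.comap (Submodule.subtype A) B)

/-- A regular local ring: a Noetherian local ring whose maximal ideal can be generated by
`Krull dimension` many elements. -/
def IsRegularLocal (S : Type*) [CommRing S] [IsLocalRing S] : Prop :=
  IsNoetherianRing S ∧ ∃ s : Finset S, Ideal.span (s : Set S) = maximalIdeal S ∧
    (s.card : WithBot ℕ∞) = ringKrullDim S




section LengthLemmas

variable {R M M' : Type*} [CommRing R] [AddCommGroup M] [Module R M]
  [AddCommGroup M'] [Module R M']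

lemma mlen_eq_iSup :
    mlen R M = ⨆ (p : LTSeries (Submodule R M)), (p.length : ℕ∞) := by
  have h : Order.krullDim (Submodule R M)
      = ((⨆ (p : LTSeries (Submodule R M)), (p.length : ℕ∞) : ℕ∞) : WithBot ℕ∞) := by
    rw [Order.krullDim_eq_iSup_length, WithBot.coe_iSup (OrderTop.bddAbove _)]
  rw [mlen, h, WithBot.unbotD_coe]

lemma mlen_congr (e : M ≃ₗ[R] M') : mlen R M = mlen R M' := by
  unfold mlen
  rw [Order.krullDim_eq_of_orderIso (Submodule.orderIsoMapComap e)]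

lemma mlen_eq_zero_of_subsingleton [h : Subsingleton M] : mlen R M = 0 := by
  have hs : Subsingleton (Submodule R M) := Submodule.subsingleton_iff R |>.mpr h
  have h1 : Order.krullDim (Submodule R M) ≤ 0 := Order.krullDim_nonpos_of_subsingleton
  have h2 : (0 : WithBot ℕ∞) ≤ Order.krullDim (Submodule R M) :=
    Order.krullDim_nonneg
  have : Order.krullDim (Submodule R M) = ((0 : ℕ∞) : WithBot ℕ∞) := le_antisymm h1 h2
  rw [mlen, this, WithBot.unbotD_coe]

lemma subsingleton_of_mlen_zero (h : mlen R M = 0) : Subsingleton M := by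
  by_contra hns
  have : Nontrivial M := not_subsingleton_iff_nontrivial.mp hns
  have hbt : (⊥ : Submodule R M) < ⊤ := bot_lt_top
  let p : LTSeries (Submodule R M) := (RelSeries.singleton _ (⊥ : Submodule R M)).snoc ⊤ hbt
  have hp : (p.length : ℕ∞) ≤ mlen R M := by
    rw [mlen_eq_iSup]
    exact le_iSup (fun q : LTSeries (Submodule R M) => (q.length : ℕ∞)) p
  rw [h] at hp
  have hl : p.length = 1 := rfl
  rw [hl] at hp
  simp at hp

lemma mlen_simple [h : IsSimpleModule R M] : mlen R M = 1 := by
  rw [mlen_eq_iSup]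
  apply le_antisymm
  · refine iSup_le fun p => ?_
    have : p.length ≤ 1 := by
      by_contra hc
      push_neg at hc
      have h01 : p ⟨0, by omega⟩ < p ⟨1, by omega⟩ := p.strictMono (by simp [Fin.lt_def])
      have h12 : p ⟨1, by omega⟩ < p ⟨2, by omega⟩ := p.strictMono (by simp [Fin.lt_def])
      rcases h.eq_bot_or_eq_top (p ⟨1, by omega⟩) with he | he
      · rw [he] at h01; exact (not_lt_bot h01)
      · rw [he] at h12; exact (not_top_lt h12)
    exact_mod_cast this
  · let p : LTSeries (Submodule R M) :=
      (RelSeries.singleton _ (⊥ : Submodule R M)).snoc ⊤ (bot_lt_top : (⊥ : Submodule R M) < ⊤)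
    have := le_iSup (fun q : LTSeries (Submodule R M) => (q.length : ℕ∞)) p
    have hl : p.length = 1 := rfl
    rw [hl] at this
    simpa using this

end LengthLemmas

section Add

variable {R M : Type*} [CommRing R] [AddCommGroup M] [Module R M] (N : Submodule R M)

lemma chain_split (c : LTSeries (Submodule R M)) :
    ∃ (a : LTSeries (Submodule R N)) (b : LTSeries (Submodule R (M ⧸ N))),
      a.last = Submodule.comap N.subtype c.last ∧ b.last = Submodule.map N.mkQ c.last ∧
      c.length ≤ a.length + b.length := by
  suffices H : ∀ (L : ℕ) (c : LTSeries (Submodule R M)), c.length = L →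
      ∃ (a : LTSeries (Submodule R N)) (b : LTSeries (Submodule R (M ⧸ N))),
      a.last = Submodule.comap N.subtype c.last ∧ b.last = Submodule.map N.mkQ c.last ∧
      c.length ≤ a.length + b.length from H c.length c rfl
  intro L
  induction L with
  | zero =>
      exact fun c hL => ⟨RelSeries.singleton _ _, RelSeries.singleton _ _, rfl, rfl, by omega⟩
  | succ L ih =>
      intro c hL
      obtain ⟨a, b, ha, hb, hab⟩ := ih c.eraseLast (by simp [hL])
      have hlt : c.eraseLast.last < c.last := c.eraseLast_last_rel_last (by omega)
      have hc1 : Submodule.comap N.subtype c.eraseLast.last ≤ Submodule.comap N.subtype c.last :=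
        Submodule.comap_mono hlt.le
      have hc2 : Submodule.map N.mkQ c.eraseLast.last ≤ Submodule.map N.mkQ c.last :=
        Submodule.map_mono hlt.le
      have hel : c.eraseLast.length = L := by simp [hL]
      have key : ¬ (Submodule.comap N.subtype c.eraseLast.last = Submodule.comap N.subtype c.last
          ∧ Submodule.map N.mkQ c.eraseLast.last = Submodule.map N.mkQ c.last) := by
        rintro ⟨k1, k2⟩
        apply hlt.ne
        set p := c.eraseLast.last with hp
        set q := c.last with hq
        have e1 : N ⊓ p = N ⊓ q := by
          rw [← Submodule.map_comap_subtype, ← Submodule.map_comap_subtype, k1]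
        have e2 : N ⊔ p = N ⊔ q := by
          rw [← Submodule.comap_map_mkQ, ← Submodule.comap_map_mkQ, k2]
        have hqle : q ≤ p ⊔ N := by
          have hq2 : q ≤ N ⊔ q := le_sup_right
          rwa [← e2, sup_comm] at hq2
        calc p = p ⊔ (N ⊓ p) := (sup_eq_left.mpr inf_le_right).symm
          _ = p ⊔ (N ⊓ q) := by rw [e1]
          _ = (p ⊔ N) ⊓ q := (sup_inf_assoc_of_le N hlt.le).symm
          _ = q := inf_eq_right.mpr hqle
      rcases hc1.lt_or_eq with h1 | h1
      · rcases hc2.lt_or_eq with h2 | h2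
        · refine ⟨a.snoc _ (ha ▸ h1), b.snoc _ (hb ▸ h2), ?_, ?_, ?_⟩
          · simp
          · simp
          · simp only [RelSeries.snoc_length]; omega
        · refine ⟨a.snoc _ (ha ▸ h1), b, ?_, hb.trans h2, ?_⟩
          · simp
          · simp only [RelSeries.snoc_length]; omega
      · rcases hc2.lt_or_eq with h2 | h2
        · refine ⟨a, b.snoc _ (hb ▸ h2), ha.trans h1, ?_, ?_⟩
          · simp
          · simp only [RelSeries.snoc_length]; omega
        · exact absurd ⟨h1, h2⟩ key

lemma mlen_additive : mlen R M = mlen R N + mlen R (M ⧸ N) := by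
  apply le_antisymm
  · rw [mlen_eq_iSup (M := M), mlen_eq_iSup (M := ↥N), mlen_eq_iSup (M := M ⧸ N)]
    refine iSup_le fun c => ?_
    obtain ⟨a, b, -, -, h⟩ := chain_split N c
    calc (c.length : ℕ∞) ≤ (a.length : ℕ∞) + (b.length : ℕ∞) := by exact_mod_cast h
      _ ≤ _ := add_le_add (le_iSup (fun p : LTSeries _ => (p.length : ℕ∞)) a)
          (le_iSup (fun p : LTSeries _ => (p.length : ℕ∞)) b)
  · rw [mlen_eq_iSup (M := ↥N), mlen_eq_iSup (M := M ⧸ N)]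
    apply ENat.iSup_add_iSup_le
    intro a b
    have hmono1 : StrictMono (fun P : Submodule R N => Submodule.map N.subtype P) := by
      have hinj := Submodule.map_injective_of_injective (f := N.subtype) N.injective_subtype
      exact Monotone.strictMono_of_injective (fun _ _ h => Submodule.map_mono h) hinj
    have hmono2 : StrictMono (fun P : Submodule R (M ⧸ N) => Submodule.comap N.mkQ P) := by
      have hinj := Submodule.comap_injective_of_surjective (f := N.mkQ) N.mkQ_surjective
      exact Monotone.strictMono_of_injective (fun _ _ h => Submodule.comap_mono h) hinj
    let a' := a.map _ hmono1
    let b' := b.map _ hmono2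
    have hle : a'.last ≤ b'.head := by
      have h1 : a'.last ≤ N := by
        show Submodule.map N.subtype a.last ≤ N
        exact Submodule.map_subtype_le N a.last
      have h2 : N ≤ b'.head := by
        show N ≤ Submodule.comap N.mkQ b.head
        calc N = Submodule.comap N.mkQ ⊥ := by rw [Submodule.comap_bot, Submodule.ker_mkQ]
          _ ≤ _ := Submodule.comap_mono bot_le
      exact h1.trans h2
    rw [mlen_eq_iSup (M := M)]
    rcases hle.lt_or_eq with h | h
    · let c := a'.append b' h
      have : (c.length : ℕ∞) ≤ _ := le_iSup (fun p : LTSeries (Submodule R M) =>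
        (p.length : ℕ∞)) c
      refine le_trans ?_ this
      have hlen : c.length = a.length + b.length + 1 := rfl
      rw [hlen]
      push_cast
      exact le_add_of_nonneg_right (by positivity)
    · let c := a'.smash b' h
      have : (c.length : ℕ∞) ≤ _ := le_iSup (fun p : LTSeries (Submodule R M) =>
        (p.length : ℕ∞)) c
      refine le_trans ?_ this
      have hlen : c.length = a.length + b.length := rfl
      rw [hlen]
      push_cast
      exact le_refl _
end Add


section IdealLen

variable {R : Type*} [CommRing R]

lemma len_additive {A B : Ideal R} (h : B ≤ A) :
    mlen R ↥A = mlen R ↥B + qlen A B := by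
  have h1 := mlen_additive (Submodule.comap A.subtype B) (M := ↥A)
  rw [mlen_congr (Submodule.comapSubtypeEquivOfLe h)] at h1
  exact h1

lemma len_mono {A B : Ideal R} (h : B ≤ A) : mlen R ↥B ≤ mlen R ↥A := by
  rw [len_additive h]; exact le_self_add

lemma eq_of_le_of_len_le {A B : Ideal R} (h : B ≤ A) (hfin : mlen R ↥B ≠ ⊤)
    (hle : mlen R ↥A ≤ mlen R ↥B) : A = B := by
  have hadd := len_additive h
  have hq : qlen A B = 0 := by
    have h2 : mlen R ↥B + qlen A B ≤ mlen R ↥B + 0 := by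
      rw [add_zero]; exact hadd ▸ hle
    exact le_antisymm ((WithTop.add_le_add_iff_left hfin).mp h2) zero_le
  have hss : Subsingleton (↥A ⧸ Submodule.comap A.subtype B) := subsingleton_of_mlen_zero hq
  refine le_antisymm (fun a haA => ?_) h
  have hz : (Submodule.Quotient.mk (⟨a, haA⟩ : ↥A) :
      ↥A ⧸ Submodule.comap A.subtype B) = 0 := Subsingleton.elim _ _
  have hm := (Submodule.Quotient.mk_eq_zero (Submodule.comap A.subtype B)).mp hz
  simpa using hm

lemma qlen_covBy {A B : Ideal R} (h : B ⋖ A) : qlen A B = 1 := by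
  have hs := (covBy_iff_quot_is_simple h.le).mp h
  exact mlen_simple

end IdealLen


section Main

variable {R : Type*} [CommRing R] [IsLocalRing R]

lemma cover_aux {z : R} (hz : z ∈ maximalIdeal R) (hz2 : z ∉ (maximalIdeal R)^2) :
    maximalIdeal R * Ideal.span {z} ⋖ Ideal.span {z} := by
  have hspan : Ideal.span {z} ≤ maximalIdeal R := Ideal.span_le.mpr (by simpa using hz)
  have hsub : maximalIdeal R * Ideal.span {z} ≤ (maximalIdeal R)^2 := by
    rw [pow_two]; exact Ideal.mul_mono_right hspan
  constructor
  · refine lt_of_le_of_ne Ideal.mul_le_right ?_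
    intro he
    have hzm : z ∈ maximalIdeal R * Ideal.span {z} := by
      rw [he]; exact Ideal.mem_span_singleton_self z
    exact hz2 (hsub hzm)
  · intro C hC1 hC2
    obtain ⟨c, hcC, hcn⟩ := SetLike.exists_of_lt hC1
    obtain ⟨r, rfl⟩ := Ideal.mem_span_singleton.mp (hC2.le hcC)
    by_cases hr : r ∈ maximalIdeal R
    · exact hcn (mul_comm r z ▸ Ideal.mul_mem_mul hr (Ideal.mem_span_singleton_self z))
    · have hu : IsUnit r := by
        by_contra hnu
        exact hr ((IsLocalRing.mem_maximalIdeal r).mpr hnu)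
      obtain ⟨u, rfl⟩ := hu
      have hzC : z ∈ C := by
        have : ((u⁻¹ : Rˣ) : R) * (z * u) = z := by
          rw [mul_comm z (u : R), ← mul_assoc, Units.inv_mul, one_mul]
        exact this ▸ Ideal.mul_mem_left C _ hcC
      exact hC2.not_ge (Ideal.span_le.mpr (by simpa using hzC))

theorem exact_pair_iff_aux {R : Type*} [CommRing R] [IsLocalRing R] [IsArtinianRing R]
    (n : ℕ) (hn : 2 ≤ n)
    (h1 : qlen (maximalIdeal R) ((maximalIdeal R) ^ 2) = (n : ℕ∞))
    (h2 : qlen ((maximalIdeal R) ^ 2) ((maximalIdeal R) ^ 3) = ((n - 1 : ℕ) : ℕ∞))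
    (h3 : (maximalIdeal R) ^ 3 = ⊥)
    (x y : R) (hx : x ∈ maximalIdeal R) (hx2 : x ∉ (maximalIdeal R) ^ 2)
    (hy : y ∈ maximalIdeal R) (hy2 : y ∉ (maximalIdeal R) ^ 2) :
    (Submodule.colon (⊥ : Ideal R) (Ideal.span {x}) = Ideal.span {y} ∧
      Submodule.colon (⊥ : Ideal R) (Ideal.span {y}) = Ideal.span {x}) ↔
    (x * y = 0 ∧ maximalIdeal R * Ideal.span {x} = (maximalIdeal R) ^ 2 ∧
      maximalIdeal R * Ideal.span {y} = (maximalIdeal R) ^ 2) := by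
  have hm2m : (maximalIdeal R)^2 ≤ maximalIdeal R := Ideal.pow_le_self two_ne_zero
  have hm3m2 : (maximalIdeal R)^3 ≤ (maximalIdeal R)^2 := Ideal.pow_le_pow_right (by omega)
  have hcoatom : maximalIdeal R ⋖ (⊤ : Ideal R) := by
    have hco : IsCoatom (maximalIdeal R) :=
      Ideal.isMaximal_def.mp (IsLocalRing.maximalIdeal.isMaximal R)
    exact ⟨hco.1.lt_top, fun b hb hbt => hbt.ne (hco.2 b hb)⟩
  have hlen_bot : mlen R ↥((maximalIdeal R)^3) = 0 := by
    rw [h3]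
    haveI : Subsingleton ↥(⊥ : Ideal R) := Submodule.subsingleton_iff_eq_bot.mpr rfl
    exact mlen_eq_zero_of_subsingleton
  have hlm2 : mlen R ↥((maximalIdeal R)^2) = ((n-1 : ℕ) : ℕ∞) := by
    rw [len_additive hm3m2, hlen_bot, h2, zero_add]
  have hlm : mlen R ↥(maximalIdeal R) = ((n-1:ℕ):ℕ∞) + (n:ℕ∞) := by
    rw [len_additive hm2m, hlm2, h1]
  have hlR : mlen R R = ((2*n : ℕ) : ℕ∞) := by
    have htop : mlen R R = mlen R ↥(⊤ : Ideal R) := mlen_congr (Submodule.topEquiv).symm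
    rw [htop, len_additive le_top, hlm, qlen_covBy hcoatom]
    have h' : (n-1) + n + 1 = 2*n := by omega
    exact_mod_cast congrArg (Nat.cast : ℕ → ℕ∞) h'
  have key : ∀ z : R, z ∈ maximalIdeal R → z ∉ (maximalIdeal R)^2 →
      mlen R ↥(Ideal.span {z}) = mlen R ↥(maximalIdeal R * Ideal.span {z}) + 1 ∧
      mlen R R = mlen R ↥(Submodule.colon (⊥ : Ideal R) (Ideal.span {z}))
        + mlen R ↥(Ideal.span {z}) ∧
      maximalIdeal R * Ideal.span {z} ≤ (maximalIdeal R)^2 := by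
    intro z hz hz2
    have hcov := cover_aux hz hz2
    refine ⟨by rw [len_additive hcov.le, qlen_covBy hcov], ?_, ?_⟩
    · set f := LinearMap.toSpanSingleton R R z with hf
      have hker : LinearMap.ker f = Submodule.colon (⊥ : Ideal R) (Ideal.span {z}) := by
        ext r
        rw [LinearMap.mem_ker,
          show f r = r * z from by simp [hf, LinearMap.toSpanSingleton_apply, smul_eq_mul],
          Submodule.mem_colon_span_singleton, Ideal.mem_bot, smul_eq_mul]
      have hrange : LinearMap.range f = Ideal.span {z} := by
        rw [hf, ← LinearMap.span_singleton_eq_range, Ideal.submodule_span_eq]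
      calc mlen R R = mlen R ↥(LinearMap.ker f) + mlen R (R ⧸ LinearMap.ker f) :=
            mlen_additive _
        _ = _ := by rw [mlen_congr (f.quotKerEquivRange), hker, hrange]
    · rw [pow_two]
      exact Ideal.mul_mono_right (Ideal.span_le.mpr (by simpa using hz))
  obtain ⟨ex1, ex2, ex3⟩ := key x hx hx2
  obtain ⟨ey1, ey2, ey3⟩ := key y hy hy2
  have hmix_le : mlen R ↥(maximalIdeal R * Ideal.span {x}) ≤ ((n-1:ℕ):ℕ∞) :=
    hlm2 ▸ len_mono ex3
  have hmiy_le : mlen R ↥(maximalIdeal R * Ideal.span {y}) ≤ ((n-1:ℕ):ℕ∞) :=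
    hlm2 ▸ len_mono ey3
  have hfa : mlen R ↥(maximalIdeal R * Ideal.span {x}) ≠ ⊤ := by
    intro ht; rw [ht] at hmix_le; simp at hmix_le
  have hfb : mlen R ↥(maximalIdeal R * Ideal.span {y}) ≠ ⊤ := by
    intro ht; rw [ht] at hmiy_le; simp at hmiy_le
  constructor
  · rintro ⟨hax, hay⟩
    have hxy : x * y = 0 := by
      have hyc : y ∈ Submodule.colon (⊥ : Ideal R) (Ideal.span {x}) := by
        rw [hax]; exact Ideal.mem_span_singleton_self y
      have h0 := Submodule.mem_colon_span_singleton.mp hyc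
      rw [Ideal.mem_bot] at h0
      rw [mul_comm]; exact h0
    refine ⟨hxy, ?_, ?_⟩
    · -- lengths
      have E : ((2*n:ℕ):ℕ∞) = (mlen R ↥(maximalIdeal R * Ideal.span {y}) + 1)
          + (mlen R ↥(maximalIdeal R * Ideal.span {x}) + 1) := by
        rw [← hlR, ex2, hax, ey1, ex1]
      lift mlen R ↥(maximalIdeal R * Ideal.span {x}) to ℕ using hfa with a ha
      lift mlen R ↥(maximalIdeal R * Ideal.span {y}) to ℕ using hfb with b hb
      have En : 2*n = (b + 1) + (a + 1) := by exact_mod_cast E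
      have hla : a ≤ n - 1 := by exact_mod_cast hmix_le
      have hlb : b ≤ n - 1 := by exact_mod_cast hmiy_le
      have haval : a = n - 1 := by omega
      refine (eq_of_le_of_len_le ex3 (by rw [← ha]; simp) ?_).symm
      rw [hlm2, ← ha, haval]
    · have E : ((2*n:ℕ):ℕ∞) = (mlen R ↥(maximalIdeal R * Ideal.span {x}) + 1)
          + (mlen R ↥(maximalIdeal R * Ideal.span {y}) + 1) := by
        rw [← hlR, ey2, hay, ex1, ey1]
      lift mlen R ↥(maximalIdeal R * Ideal.span {x}) to ℕ using hfa with a ha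
      lift mlen R ↥(maximalIdeal R * Ideal.span {y}) to ℕ using hfb with b hb
      have En : 2*n = (a + 1) + (b + 1) := by exact_mod_cast E
      have hla : a ≤ n - 1 := by exact_mod_cast hmix_le
      have hlb : b ≤ n - 1 := by exact_mod_cast hmiy_le
      have hbval : b = n - 1 := by omega
      refine (eq_of_le_of_len_le ey3 (by rw [← hb]; simp) ?_).symm
      rw [hlm2, ← hb, hbval]
  · rintro ⟨hxy, hxm, hym⟩
    have hn1 : ((n-1:ℕ):ℕ∞) + 1 = (n:ℕ∞) := by
      exact_mod_cast congrArg (Nat.cast : ℕ → ℕ∞) (by omega : (n-1) + 1 = n)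
    have hIx : mlen R ↥(Ideal.span {x}) = (n:ℕ∞) := by rw [ex1, hxm, hlm2, hn1]
    have hIy : mlen R ↥(Ideal.span {y}) = (n:ℕ∞) := by rw [ey1, hym, hlm2, hn1]
    have hntop : (n : ℕ∞) ≠ ⊤ := by simp
    have hAx : mlen R ↥(Submodule.colon (⊥ : Ideal R) (Ideal.span {x})) = (n:ℕ∞) := by
      have e := ex2
      rw [hlR, hIx] at e
      have e2 : ((2*n:ℕ):ℕ∞) = (n:ℕ∞) + (n:ℕ∞) := by
        exact_mod_cast congrArg (Nat.cast : ℕ → ℕ∞) (by omega : 2*n = n + n)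
      exact WithTop.add_right_cancel hntop (e.symm.trans e2)
    have hAy : mlen R ↥(Submodule.colon (⊥ : Ideal R) (Ideal.span {y})) = (n:ℕ∞) := by
      have e := ey2
      rw [hlR, hIy] at e
      have e2 : ((2*n:ℕ):ℕ∞) = (n:ℕ∞) + (n:ℕ∞) := by
        exact_mod_cast congrArg (Nat.cast : ℕ → ℕ∞) (by omega : 2*n = n + n)
      exact WithTop.add_right_cancel hntop (e.symm.trans e2)
    constructor
    · refine eq_of_le_of_len_le ?_ (by rw [hIy]; exact hntop) (by rw [hAx, hIy])
      refine Ideal.span_le.mpr ?_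
      intro t ht
      rcases ht with rfl
      exact Submodule.mem_colon_span_singleton.mpr (by rw [Ideal.mem_bot, smul_eq_mul, mul_comm]; exact hxy)
    · refine eq_of_le_of_len_le ?_ (by rw [hIx]; exact hntop) (by rw [hAy, hIx])
      refine Ideal.span_le.mpr ?_
      intro t ht
      rcases ht with rfl
      exact Submodule.mem_colon_span_singleton.mpr (by rw [Ideal.mem_bot]; exact hxy)

end Main

/-- Let `(R, m, k)` be an artinian local ring with Hilbert function
`(1, n, n-1)` for some `n ≥ 2`, and let `x, y ∈ m \ m²`. Then `(x, y)` is an exact pair of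
zero-divisors (`(0 : x) = (y)` and `(0 : y) = (x)`) iff `xy = 0` and `xm = ym = m²`. -/
theorem exact_pair_iff {R : Type*} [CommRing R] [IsLocalRing R] [IsArtinianRing R]
    (n : ℕ) (hn : 2 ≤ n)
    (h1 : qlen (maximalIdeal R) ((maximalIdeal R) ^ 2) = (n : ℕ∞))
    (h2 : qlen ((maximalIdeal R) ^ 2) ((maximalIdeal R) ^ 3) = ((n - 1 : ℕ) : ℕ∞))
    (h3 : (maximalIdeal R) ^ 3 = ⊥)
    (x y : R) (hx : x ∈ maximalIdeal R) (hx2 : x ∉ (maximalIdeal R) ^ 2)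
    (hy : y ∈ maximalIdeal R) (hy2 : y ∉ (maximalIdeal R) ^ 2) :
    (Submodule.colon (⊥ : Ideal R) (Ideal.span {x}) = Ideal.span {y} ∧
      Submodule.colon (⊥ : Ideal R) (Ideal.span {y}) = Ideal.span {x}) ↔
    (x * y = 0 ∧ maximalIdeal R * Ideal.span {x} = (maximalIdeal R) ^ 2 ∧
      maximalIdeal R * Ideal.span {y} = (maximalIdeal R) ^ 2) :=
  exact_pair_iff_aux n hn h1 h2 h3 x y hx hx2 hy hy2
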